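/- arXiv:0904.2426 — 2 statements merged into one kernel-verified Lean document; each statement's English description precedes it below -/
import Mathlib

section
/- Let F₁ and F₂ be probability distribution functions of positive random variables satisfying sup_{x>0} [F₁(x) − F₂(x)] < ε₁ and sup_{x>0} [F₂(x) − F₁(x)] < ε₂. Then for every integer i ≥ 1 and any α > 0, ∫₀^∞ e^{-αx} (αx)^i / i! dF₁(x) − ∫₀^∞ e^{-αx} (αx)^i / i! dF₂(x) < ε₁ + ε₂. -/
/-!
The Poisson weight `g(x) = e^{-αx} (αx)^i / i!` is log-concave on `(0, ∞)`, takes values in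
`[0, 1]` and vanishes at infinity, so for `0 < t ≤ 1` its superlevel set `{g > t}` is a bounded
open interval `(a, b) ⊆ (0, ∞)`. On such an interval
`μ₁(a, b) - μ₂(a, b) = (F₁(b-) - F₂(b-)) + (F₂(a) - F₁(a))`, which is at most the sum of the two
suprema, the values at `a` and `b-` being limits of values inside `(a, b)`. Integrating over
`t ∈ (0, 1]` with the layer-cake formula `∫ g dμ = ∫₀^∞ μ{g > t} dt` gives the claim.
-/

open MeasureTheory Filter Set Function Topology
open scoped ENNReal

theorem IsOpen.eq_Ioo_csInf_csSup {α : Type*} [ConditionallyCompleteLinearOrder α]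
    [TopologicalSpace α] [OrderTopology α] [DenselyOrdered α] [NoMinOrder α] [NoMaxOrder α]
    {s : Set α} (hs : IsOpen s) (hc : s.OrdConnected) (hne : s.Nonempty)
    (hb : BddBelow s) (ha : BddAbove s) : s = Ioo (sInf s) (sSup s) :=
  (interior_Icc (α := α) ▸ interior_maximal (subset_Icc_csInf_csSup hb ha) hs).antisymm
    (IsConnected.Ioo_csInf_csSup_subset ⟨hne, hc.isPreconnected⟩ hb ha)

theorem QuasiconcaveOn.congr {𝕜 E β : Type*} [Semiring 𝕜] [PartialOrder 𝕜] [AddCommMonoid E]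
    [LE β] [SMul 𝕜 E] {s : Set E} {f g : E → β} (hf : QuasiconcaveOn 𝕜 s f)
    (hfg : EqOn f g s) : QuasiconcaveOn 𝕜 s g := fun r => by
  convert hf r using 1
  ext x
  exact and_congr_right fun hx => by rw [hfg hx]

namespace StieltjesFunction

variable {F G : StieltjesFunction ℝ}

theorem sub_le_iSup_Ioi_sub {a u x : ℝ} (hF : Tendsto F atTop (𝓝 u)) (hx : x ∈ Ioi a) :
    F x - G x ≤ ⨆ y : Ioi a, (F y - G y) := by
  refine le_ciSup (f := fun y : Ioi a => F y - G y) ⟨u - G a, ?_⟩ ⟨x, hx⟩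
  rintro _ ⟨⟨y, hy⟩, rfl⟩
  have hFy : F y ≤ u := F.mono.ge_of_tendsto hF y
  have hGy : G a ≤ G y := G.mono (le_of_lt hy)
  dsimp only
  linarith

theorem measure_Ioo_le_add {a b c d : ℝ} (hFG : ∀ x ∈ Ioo a b, F x - G x ≤ c)
    (hGF : ∀ x ∈ Ioo a b, G x - F x ≤ d) :
    F.measure (Ioo a b) ≤ G.measure (Ioo a b) + ENNReal.ofReal (c + d) := by
  rcases le_or_gt b a with hba | hab
  · simp [Ioo_eq_empty_of_le hba]
  have hb : leftLim F b ≤ leftLim G b + c :=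
    le_of_tendsto_of_tendsto (F.mono.tendsto_leftLim b)
      ((G.mono.tendsto_leftLim b).add_const c)
      (eventually_of_mem (Ioo_mem_nhdsLT hab) fun x hx => by linarith [hFG x hx])
  have ha : G a ≤ F a + d :=
    le_of_tendsto_of_tendsto ((G.right_continuous a).mono Ioi_subset_Ici_self)
      (((F.right_continuous a).mono Ioi_subset_Ici_self).add_const d)
      (eventually_of_mem (Ioo_mem_nhdsGT hab) fun x hx => by linarith [hGF x hx])
  rw [measure_Ioo, measure_Ioo]
  calc ENNReal.ofReal (leftLim F b - F a)
      ≤ ENNReal.ofReal (leftLim G b - G a + (c + d)) := ENNReal.ofReal_le_ofReal (by linarith)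
    _ ≤ ENNReal.ofReal (leftLim G b - G a) + ENNReal.ofReal (c + d) := ENNReal.ofReal_add_le

variable {g : ℝ → ℝ} {a c d : ℝ}

theorem measure_superlevel_le_add {t : ℝ} (ht : 0 < t) (hg : Continuous g)
    (hg_quasi : QuasiconcaveOn ℝ (Ioi a) g) (hg_lim : Tendsto g atTop (𝓝 0))
    (hFG : ∀ x ∈ Ioi a, F x - G x ≤ c) (hGF : ∀ x ∈ Ioi a, G x - F x ≤ d) :
    F.measure {x ∈ Ioi a | t < g x} ≤
      G.measure {x ∈ Ioi a | t < g x} + ENNReal.ofReal (c + d) := by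
  set S := {x ∈ Ioi a | t < g x}
  rcases S.eq_empty_or_nonempty with hS | hne
  · simp [hS]
  have hS_open : IsOpen S := isOpen_Ioi.inter (isOpen_lt continuous_const hg)
  have hS_bddBelow : BddBelow S := ⟨a, fun x hx => le_of_lt hx.1⟩
  have hS_bddAbove : BddAbove S := by
    obtain ⟨R, hR⟩ := (hg_lim.eventually (gt_mem_nhds ht)).exists_forall_of_atTop
    exact ⟨R, fun x hx => le_of_not_gt fun hRx => (hR x hRx.le).not_gt hx.2⟩
  have ha : a ≤ sInf S := le_csInf hne fun x hx => le_of_lt hx.1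
  rw [hS_open.eq_Ioo_csInf_csSup (hg_quasi.convex_gt t).ordConnected hne hS_bddBelow
    hS_bddAbove]
  exact measure_Ioo_le_add (fun x hx => hFG x (ha.trans_lt hx.1))
    (fun x hx => hGF x (ha.trans_lt hx.1))

theorem setIntegral_sub_setIntegral_le {M : ℝ} (hG : G.measure (Ioi a) < ∞) (hg : Continuous g)
    (hg_nonneg : ∀ x ∈ Ioi a, 0 ≤ g x) (hg_le : ∀ x ∈ Ioi a, g x ≤ M)
    (hg_quasi : QuasiconcaveOn ℝ (Ioi a) g) (hg_lim : Tendsto g atTop (𝓝 0))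
    (hFG : ∀ x ∈ Ioi a, F x - G x ≤ c) (hGF : ∀ x ∈ Ioi a, G x - F x ≤ d) :
    ∫ x in Ioi a, g x ∂F.measure - ∫ x in Ioi a, g x ∂G.measure ≤ M * (c + d) := by
  have hM : 0 ≤ M := (hg_nonneg _ (lt_add_one a)).trans (hg_le _ (lt_add_one a))
  have hcd : 0 ≤ c + d := by linarith [hFG _ (lt_add_one a), hGF _ (lt_add_one a)]
  have hsuperlevel : ∀ t ∈ Ioi (0 : ℝ), F.measure.restrict (Ioi a) {x | t < g x} ≤
      G.measure.restrict (Ioi a) {x | t < g x} +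
        (Ioc 0 M).indicator (fun _ => ENNReal.ofReal (c + d)) t := by
    intro t ht
    have hmeas : MeasurableSet {x | t < g x} := measurableSet_lt measurable_const hg.measurable
    rw [Measure.restrict_apply hmeas, Measure.restrict_apply hmeas, inter_comm]
    rcases le_or_gt t M with htM | hMt
    · rw [indicator_of_mem (show t ∈ Ioc 0 M from ⟨ht, htM⟩)]
      exact measure_superlevel_le_add ht hg hg_quasi hg_lim hFG hGF
    · have hempty : Ioi a ∩ {x | t < g x} = ∅ :=
        eq_empty_of_forall_notMem fun x hx => (hg_le x hx.1).not_gt (hMt.trans hx.2)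
      simp [hempty]
  have hg_ae_nonneg : ∀ μ : Measure ℝ, 0 ≤ᵐ[μ.restrict (Ioi a)] g := fun μ =>
    ae_restrict_of_forall_mem _root_.measurableSet_Ioi hg_nonneg
  have hlayer : ∫⁻ x in Ioi a, ENNReal.ofReal (g x) ∂F.measure ≤
      ∫⁻ x in Ioi a, ENNReal.ofReal (g x) ∂G.measure + ENNReal.ofReal (M * (c + d)) := by
    rw [lintegral_eq_lintegral_meas_lt _ (hg_ae_nonneg _) hg.aemeasurable,
      lintegral_eq_lintegral_meas_lt _ (hg_ae_nonneg _) hg.aemeasurable]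
    calc _ ≤ ∫⁻ t in Ioi 0, (G.measure.restrict (Ioi a) {x | t < g x} +
            (Ioc 0 M).indicator (fun _ => ENNReal.ofReal (c + d)) t) :=
          setLIntegral_mono' _root_.measurableSet_Ioi hsuperlevel
      _ = _ := by
        rw [lintegral_add_right _ (measurable_const.indicator measurableSet_Ioc),
          lintegral_indicator measurableSet_Ioc, setLIntegral_const,
          Measure.restrict_apply measurableSet_Ioc,
          inter_eq_self_of_subset_left Ioc_subset_Ioi_self, Real.volume_Ioc, sub_zero,
          ← ENNReal.ofReal_mul hcd, mul_comm]
  have hG_int : IntegrableOn g (Ioi a) G.measure :=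
    IntegrableOn.of_bound hG hg.aestronglyMeasurable M
      (ae_restrict_of_forall_mem _root_.measurableSet_Ioi fun x hx => by
        rw [Real.norm_of_nonneg (hg_nonneg x hx)]; exact hg_le x hx)
  have hG_fin := hG_int.lintegral_lt_top.ne
  have hreal :=
    ENNReal.toReal_mono (ENNReal.add_ne_top.mpr ⟨hG_fin, ENNReal.ofReal_ne_top⟩) hlayer
  rw [ENNReal.toReal_add hG_fin ENNReal.ofReal_ne_top,
    ENNReal.toReal_ofReal (mul_nonneg hM hcd)] at hreal
  rw [integral_eq_lintegral_of_nonneg_ae (hg_ae_nonneg _) hg.aestronglyMeasurable,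
    integral_eq_lintegral_of_nonneg_ae (hg_ae_nonneg _) hg.aestronglyMeasurable]
  linarith

end StieltjesFunction

noncomputable def poissonWeight (α : ℝ) (i : ℕ) (x : ℝ) : ℝ :=
  Real.exp (-α * x) * (α * x) ^ i / (Nat.factorial i)

section poissonWeight

variable {α : ℝ} {i : ℕ}

theorem continuous_poissonWeight : Continuous (poissonWeight α i) := by
  unfold poissonWeight; fun_prop

theorem poissonWeight_nonneg (hα : 0 ≤ α) {x : ℝ} (hx : 0 ≤ x) : 0 ≤ poissonWeight α i x := by
  unfold poissonWeight; positivity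

theorem poissonWeight_le_one (hα : 0 ≤ α) {x : ℝ} (hx : 0 ≤ x) : poissonWeight α i x ≤ 1 :=
  calc poissonWeight α i x = Real.exp (-(α * x)) * ((α * x) ^ i / i.factorial) := by
        rw [poissonWeight, neg_mul, mul_div_assoc]
    _ ≤ Real.exp (-(α * x)) * Real.exp (α * x) := by
        gcongr; exact Real.pow_div_factorial_le_exp _ (by positivity) i
    _ = 1 := by rw [← Real.exp_add, neg_add_cancel, Real.exp_zero]

theorem tendsto_poissonWeight_atTop (hα : 0 < α) :
    Tendsto (poissonWeight α i) atTop (𝓝 0) := by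
  convert ((Real.tendsto_pow_mul_exp_neg_atTop_nhds_zero i).comp
    (tendsto_id.const_mul_atTop hα)).div_const (i.factorial : ℝ) using 1
  · ext x
    simp only [poissonWeight, comp_apply, id, neg_mul]
    ring
  · rw [zero_div]

theorem quasiconcaveOn_poissonWeight (hα : 0 < α) :
    QuasiconcaveOn ℝ (Ioi 0) (poissonWeight α i) := by
  have hconcave : ConcaveOn ℝ (Ioi 0) (fun x => (i : ℝ) * Real.log x - α * x) :=
    (strictConcaveOn_log_Ioi.concaveOn.smul (Nat.cast_nonneg i)).sub
      ((convexOn_id (convex_Ioi 0)).smul hα.le)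
  refine (hconcave.quasiconcaveOn.monotone_comp
    (g := fun u => Real.exp u * (α ^ i / i.factorial))
    fun u v huv => by dsimp only; gcongr).congr fun x (hx : 0 < x) => ?_
  simp only [comp_apply, poissonWeight, Real.exp_sub, Real.exp_nat_mul, Real.exp_log hx,
    mul_pow, neg_mul, Real.exp_neg]
  ring

end poissonWeight

theorem stmt_4_general (F₁ F₂ : StieltjesFunction ℝ)
    (hF₁1 : Tendsto F₁ atTop (nhds 1)) (hF₂1 : Tendsto F₂ atTop (nhds 1))
    (ε₁ ε₂ : ℝ)
    (hsup₁ : (⨆ x : Ioi (0 : ℝ), (F₁ x - F₂ x)) < ε₁)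
    (hsup₂ : (⨆ x : Ioi (0 : ℝ), (F₂ x - F₁ x)) < ε₂)
    (α : ℝ) (hα : 0 < α) (i : ℕ) :
    (∫ x in Ioi (0 : ℝ), Real.exp (-α * x) * (α * x) ^ i / (Nat.factorial i) ∂F₁.measure)
      - (∫ x in Ioi (0 : ℝ), Real.exp (-α * x) * (α * x) ^ i / (Nat.factorial i) ∂F₂.measure)
      < ε₁ + ε₂ := by
  have hbound := F₁.setIntegral_sub_setIntegral_le (G := F₂) (g := poissonWeight α i) (M := 1)
    (F₂.measure_Ioi hF₂1 0 ▸ ENNReal.ofReal_lt_top) continuous_poissonWeight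
    (fun x hx => poissonWeight_nonneg hα.le (le_of_lt hx))
    (fun x hx => poissonWeight_le_one hα.le (le_of_lt hx))
    (quasiconcaveOn_poissonWeight hα) (tendsto_poissonWeight_atTop hα)
    (fun x hx => F₁.sub_le_iSup_Ioi_sub hF₁1 hx) (fun x hx => F₂.sub_le_iSup_Ioi_sub hF₂1 hx)
  rw [one_mul] at hbound
  exact hbound.trans_lt (add_lt_add hsup₁ hsup₂)

theorem stmt_4 (F₁ F₂ : StieltjesFunction ℝ)
    (hF₁0 : ∀ x ≤ (0 : ℝ), F₁ x = 0) (hF₂0 : ∀ x ≤ (0 : ℝ), F₂ x = 0)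
    (hF₁1 : Tendsto F₁ atTop (nhds 1)) (hF₂1 : Tendsto F₂ atTop (nhds 1))
    (ε₁ ε₂ : ℝ) (hε₁ : 0 < ε₁) (hε₂ : 0 < ε₂)
    (hsup₁ : (⨆ x : Ioi (0 : ℝ), (F₁ x - F₂ x)) < ε₁)
    (hsup₂ : (⨆ x : Ioi (0 : ℝ), (F₂ x - F₁ x)) < ε₂)
    (α : ℝ) (hα : 0 < α) (i : ℕ) (hi : 1 ≤ i) :
    (∫ x in Ioi (0 : ℝ), Real.exp (-α * x) * (α * x) ^ i / (Nat.factorial i) ∂F₁.measure)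
      - (∫ x in Ioi (0 : ℝ), Real.exp (-α * x) * (α * x) ^ i / (Nat.factorial i) ∂F₂.measure)
      < ε₁ + ε₂ :=
  stmt_4_general F₁ F₂ hF₁1 hF₂1 ε₁ ε₂ hsup₁ hsup₂ α hα i
end

section
/- The function G(z) = 1 − e^{-2z²} − √π z e^{-z²}(2Φ(√2 z) − 1) for z ≥ 0 (and G(z)=0 for z<0) is a probability distribution function: it is nondecreasing, G(0) = 0, and G(z) → 1 as z → ∞. -/
open MeasureTheory Set Filter

/-- The standard normal cumulative distribution function. -/
noncomputable def stdNormalCDF (t : ℝ) : ℝ :=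
  (Real.sqrt (2 * Real.pi))⁻¹ * ∫ y in Iic t, Real.exp (-y ^ 2 / 2)

/-- The convolution of `1 - exp (-2 z²)` with itself, extended by `0` for `z < 0`. -/
noncomputable def Gconv (z : ℝ) : ℝ :=
  if z < 0 then 0
  else 1 - Real.exp (-2 * z ^ 2)
    - Real.sqrt Real.pi * z * Real.exp (-z ^ 2) * (2 * stdNormalCDF (Real.sqrt 2 * z) - 1)

/-!
For `z ≥ 0` write `G z = g z := 1 - e^{-2z²} - √π z e^{-z²} erf z`, where
`erf z = 2Φ(√2 z) - 1`. Since `erf' z = (2/√π) e^{-z²}`, the product rule gives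
`g' z = 2z e^{-2z²} - √π (1 - 2z²) e^{-z²} erf z`, which is nonnegative because
`0 ≤ √π erf z ≤ 2z` and `1 - 2z² ≤ e^{-z²}`. As `g 0 = 0`, `G z = g (max z 0)` is
monotone, and `g z → 1` because `z e^{-z²} → 0` while `erf` stays bounded.
-/

open Real

theorem hasDerivAt_integral_Iic {E : Type*} [NormedAddCommGroup E] [NormedSpace ℝ E]
    [CompleteSpace E] {f : ℝ → E} (hf : Integrable f) (hc : Continuous f) (t : ℝ) :
    HasDerivAt (fun u => ∫ y in Iic u, f y) (f t) t := by
  have hsplit :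
      (fun u => ∫ y in Iic u, f y) = fun u => (∫ y in Iic 0, f y) + ∫ y in 0..u, f y := by
    ext u
    rw [← intervalIntegral.integral_Iic_sub_Iic hf.integrableOn hf.integrableOn, add_sub_cancel]
  rw [hsplit]
  exact (intervalIntegral.integral_hasDerivAt_right hf.intervalIntegrable
    hc.stronglyMeasurable.stronglyMeasurableAtFilter hc.continuousAt).const_add _

theorem integrable_exp_neg_sq_div_two : Integrable fun y : ℝ => exp (-y ^ 2 / 2) := by
  convert integrable_exp_neg_mul_sq (by norm_num : (0 : ℝ) < 1 / 2) using 2 with y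
  ring_nf

theorem integral_exp_neg_sq_div_two : ∫ y, exp (-y ^ 2 / 2) = √(2 * π) := by
  convert integral_gaussian (1 / 2) using 2 with y
  · ring_nf
  · ring_nf

theorem integral_Iic_zero_exp_neg_sq_div_two :
    ∫ y in Iic 0, exp (-y ^ 2 / 2) = √(2 * π) / 2 := by
  have hsymm : ∫ y in Iic 0, exp (-y ^ 2 / 2) = ∫ y in Ioi 0, exp (-y ^ 2 / 2) := by
    rw [← neg_zero, ← integral_comp_neg_Iic]
    simp
  have hsplit := intervalIntegral.integral_Iic_add_Ioi (b := 0)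
    integrable_exp_neg_sq_div_two.integrableOn integrable_exp_neg_sq_div_two.integrableOn
  rw [integral_exp_neg_sq_div_two] at hsplit
  linarith

theorem sqrt_two_mul_pi_pos : 0 < √(2 * π) := by positivity

theorem stdNormalCDF_zero : stdNormalCDF 0 = 1 / 2 := by
  rw [stdNormalCDF, integral_Iic_zero_exp_neg_sq_div_two]
  field_simp

theorem stdNormalCDF_mono : Monotone stdNormalCDF := fun _ _ hst =>
  mul_le_mul_of_nonneg_left
    (setIntegral_mono_set integrable_exp_neg_sq_div_two.integrableOn
      (.of_forall fun _ => (exp_pos _).le) (.of_forall (Iic_subset_Iic.2 hst)))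
    (inv_nonneg.2 sqrt_two_mul_pi_pos.le)

theorem stdNormalCDF_le_one (t : ℝ) : stdNormalCDF t ≤ 1 := by
  rw [stdNormalCDF, inv_mul_le_iff₀ sqrt_two_mul_pi_pos, mul_one, ← integral_exp_neg_sq_div_two]
  exact setIntegral_le_integral integrable_exp_neg_sq_div_two (.of_forall fun _ => (exp_pos _).le)

theorem stdNormalCDF_sub_half_le {t : ℝ} (ht : 0 ≤ t) :
    stdNormalCDF t - 1 / 2 ≤ t / √(2 * π) := by
  rw [← stdNormalCDF_zero, stdNormalCDF, stdNormalCDF, ← mul_sub,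
    intervalIntegral.integral_Iic_sub_Iic integrable_exp_neg_sq_div_two.integrableOn
      integrable_exp_neg_sq_div_two.integrableOn, inv_mul_eq_div]
  gcongr
  calc ∫ y in 0..t, exp (-y ^ 2 / 2) ≤ ∫ _ in 0..t, (1 : ℝ) :=
        intervalIntegral.integral_mono_on ht integrable_exp_neg_sq_div_two.intervalIntegrable
          intervalIntegrable_const fun y _ => exp_le_one_iff.2 (by nlinarith)
    _ = t := by simp

theorem hasDerivAt_stdNormalCDF (t : ℝ) :
    HasDerivAt stdNormalCDF ((√(2 * π))⁻¹ * exp (-t ^ 2 / 2)) t :=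
  (hasDerivAt_integral_Iic integrable_exp_neg_sq_div_two (by fun_prop) t).const_mul _

/-- The error function `(2/√π) ∫₀^z e^{-t²} dt`, expressed through `Φ`. -/
noncomputable def erf (z : ℝ) : ℝ := 2 * stdNormalCDF (√2 * z) - 1

theorem hasDerivAt_erf (z : ℝ) : HasDerivAt erf (2 / √π * exp (-z ^ 2)) z := by
  refine ((((hasDerivAt_stdNormalCDF (√2 * z)).comp z
    ((hasDerivAt_id z).const_mul √2)).const_mul 2).sub_const 1).congr_deriv ?_
  have hsq : (√2 * z) ^ 2 = 2 * z ^ 2 := by rw [mul_pow, sq_sqrt zero_le_two]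
  rw [hsq, sqrt_mul zero_le_two]
  field_simp

theorem erf_nonneg {z : ℝ} (hz : 0 ≤ z) : 0 ≤ erf z := by
  have := stdNormalCDF_mono (by positivity : 0 ≤ √2 * z)
  rw [stdNormalCDF_zero] at this
  rw [erf]
  linarith

theorem erf_le_one (z : ℝ) : erf z ≤ 1 := by
  rw [erf]
  linarith [stdNormalCDF_le_one (√2 * z)]

theorem sqrt_pi_mul_erf_le {z : ℝ} (hz : 0 ≤ z) : √π * erf z ≤ 2 * z := by
  have h := stdNormalCDF_sub_half_le (by positivity : 0 ≤ √2 * z)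
  rw [sqrt_mul zero_le_two, mul_div_mul_left _ _ (by positivity)] at h
  rw [erf, ← le_div_iff₀' (by positivity), mul_div_assoc]
  linarith

theorem exp_neg_sq_mul_self (z : ℝ) : exp (-z ^ 2) * exp (-z ^ 2) = exp (-2 * z ^ 2) := by
  rw [← exp_add]
  ring_nf

noncomputable def gconvFormula (z : ℝ) : ℝ :=
  1 - exp (-2 * z ^ 2) - √π * z * exp (-z ^ 2) * erf z

theorem hasDerivAt_gconvFormula (z : ℝ) : HasDerivAt gconvFormula
    (2 * z * exp (-2 * z ^ 2) - √π * (1 - 2 * z ^ 2) * exp (-z ^ 2) * erf z) z := by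
  have hexp2 : HasDerivAt (fun z => exp (-2 * z ^ 2)) (exp (-2 * z ^ 2) * (-4 * z)) z := by
    refine HasDerivAt.exp (((hasDerivAt_pow 2 z).const_mul (-2)).congr_deriv ?_)
    push_cast
    ring
  have hexp1 : HasDerivAt (fun z => exp (-z ^ 2)) (exp (-z ^ 2) * (-2 * z)) z := by
    refine HasDerivAt.exp ((hasDerivAt_pow 2 z).fun_neg.congr_deriv ?_)
    push_cast
    ring
  refine (((hasDerivAt_const z 1).sub hexp2).sub
    ((((hasDerivAt_id z).const_mul √π).mul hexp1).mul (hasDerivAt_erf z))).congr_deriv ?_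
  simp only [id, Pi.mul_apply, ← exp_neg_sq_mul_self]
  field_simp
  ring

theorem deriv_gconvFormula_nonneg {z : ℝ} (hz : 0 ≤ z) : 0 ≤ deriv gconvFormula z := by
  rw [(hasDerivAt_gconvFormula z).deriv, sub_nonneg]
  have hpoly : 1 - 2 * z ^ 2 ≤ exp (-z ^ 2) := by
    linarith [add_one_le_exp (-z ^ 2), sq_nonneg z]
  have herf := mul_nonneg (sqrt_nonneg π) (erf_nonneg hz)
  calc √π * (1 - 2 * z ^ 2) * exp (-z ^ 2) * erf z
      = (1 - 2 * z ^ 2) * (√π * erf z) * exp (-z ^ 2) := by ring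
    _ ≤ exp (-z ^ 2) * (2 * z) * exp (-z ^ 2) := by
        gcongr ?_ * _
        nlinarith [sqrt_pi_mul_erf_le hz, exp_pos (-z ^ 2)]
    _ = 2 * z * exp (-2 * z ^ 2) := by rw [← exp_neg_sq_mul_self]; ring

theorem monotoneOn_gconvFormula : MonotoneOn gconvFormula (Ici 0) := by
  have hdiff : Differentiable ℝ gconvFormula := fun z =>
    (hasDerivAt_gconvFormula z).differentiableAt
  refine monotoneOn_of_deriv_nonneg (convex_Ici 0) hdiff.continuous.continuousOn
    hdiff.differentiableOn fun z hz => deriv_gconvFormula_nonneg ?_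
  rw [interior_Ici] at hz
  exact hz.le

theorem gconvFormula_zero : gconvFormula 0 = 0 := by simp [gconvFormula]

theorem tendsto_mul_exp_neg_sq_atTop : Tendsto (fun z => z * exp (-z ^ 2)) atTop (nhds 0) := by
  refine squeeze_zero' ?_ ?_ (by simpa using tendsto_pow_mul_exp_neg_atTop_nhds_zero 1)
  · filter_upwards [eventually_ge_atTop 0] with z hz
    positivity
  · filter_upwards [eventually_ge_atTop 1] with z hz
    gcongr
    nlinarith

theorem tendsto_gconvFormula_atTop : Tendsto gconvFormula atTop (nhds 1) := by
  have herf : Tendsto (fun z => √π * z * exp (-z ^ 2) * erf z) atTop (nhds 0) := by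
    refine squeeze_zero' ?_ ?_ (by simpa using tendsto_mul_exp_neg_sq_atTop.const_mul √π)
    · filter_upwards [eventually_ge_atTop 0] with z hz
      have := erf_nonneg hz
      positivity
    · filter_upwards [eventually_ge_atTop 0] with z hz
      rw [mul_assoc √π]
      exact mul_le_of_le_one_right (by positivity) (erf_le_one z)
  have hexp : Tendsto (fun z => exp (-2 * z ^ 2)) atTop (nhds 0) :=
    tendsto_exp_atBot.comp ((tendsto_pow_atTop two_ne_zero).const_mul_atTop_of_neg
      (by norm_num))
  have h := (tendsto_const_nhds (x := (1 : ℝ)).sub hexp).sub herf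
  rwa [sub_zero, sub_zero] at h

theorem Gconv_eq_gconvFormula_max (z : ℝ) : Gconv z = gconvFormula (max z 0) := by
  rcases lt_or_ge z 0 with hz | hz
  · rw [Gconv, if_pos hz, max_eq_right hz.le, gconvFormula_zero]
  · rw [Gconv, if_neg hz.not_gt, max_eq_left hz]
    rfl

theorem stmt_9 :
    Monotone Gconv ∧ Gconv 0 = 0 ∧ Tendsto Gconv atTop (nhds 1) := by
  simp only [funext Gconv_eq_gconvFormula_max]
  refine ⟨fun x y hxy => ?_, by simp [gconvFormula_zero], ?_⟩
  · exact monotoneOn_gconvFormula (le_max_right x 0) (le_max_right y 0) (max_le_max_right 0 hxy)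
  · exact tendsto_gconvFormula_atTop.comp (tendsto_atTop_mono (le_max_left · 0) tendsto_id)
end
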